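/- For every odd natural number N ≥ 1 and every family of real angles θ_1, …, θ_N, the product of sines satisfies ∏_{k=1}^N sin(θ_k) = ((−1)^{(N−1)/2} / 2^N) · ∑_{e ∈ {−1,1}^N} (∏_{j=1}^N e_j) · sin(e_1 θ_1 + ⋯ + e_N θ_N). -/

import Mathlib

/-!
Writing `sin z = (e^{iz} - e^{-iz}) / 2i` and expanding the product gives
`∏ sin z_k = (2i)^{-N} ∑_e (∏ e_j) e^{i ⟨e, z⟩}` over all sign vectors `e`. For odd `N` the
involution `e ↦ -e` flips the sign of `∏ e_j` while fixing `cos ⟨e, z⟩`, so the cosine part of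
the sum cancels and only `i ∑_e (∏ e_j) sin ⟨e, z⟩` survives; finally `(2i)^N = 2^N (-1)^m i`
for `N = 2m + 1`.
-/

open Complex Finset

noncomputable def signVectors (ι : Type*) [Fintype ι] [DecidableEq ι] : Finset (ι → ℝ) :=
  Fintype.piFinset fun _ => {-1, 1}

variable {ι : Type*} [Fintype ι] [DecidableEq ι]

theorem neg_mem_signVectors_iff (e : ι → ℝ) : -e ∈ signVectors ι ↔ e ∈ signVectors ι := by
  simp only [signVectors, Fintype.mem_piFinset, Pi.neg_apply, mem_insert, mem_singleton,
    neg_eq_iff_eq_neg, neg_neg]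
  exact forall_congr' fun _ => or_comm

theorem sum_signVectors_comp_neg {M : Type*} [AddCommMonoid M] (f : (ι → ℝ) → M) :
    ∑ e ∈ signVectors ι, f (-e) = ∑ e ∈ signVectors ι, f e :=
  sum_equiv (Equiv.neg (ι → ℝ)) (fun e => (neg_mem_signVectors_iff e).symm) fun _ _ => rfl

theorem Complex.sin_eq_sum_signs (z : ℂ) :
    sin z = (∑ s ∈ ({-1, 1} : Finset ℝ), (s : ℂ) * exp (s * z * I)) / (2 * I) := by
  rw [sum_pair (by norm_num), eq_div_iff (by simp)]
  linear_combination (norm := (push_cast; ring_nf; rw [I_sq]; ring)) I * two_sin z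

theorem Complex.prod_sin_eq_sum_signVectors_exp (z : ι → ℂ) :
    ∏ k, sin (z k) =
      (∑ e ∈ signVectors ι, (∏ j, (e j : ℂ)) * exp ((∑ i, (e i : ℂ) * z i) * I)) /
        (2 * I) ^ Fintype.card ι := by
  simp_rw [sin_eq_sum_signs, prod_div_distrib, prod_const, card_univ, prod_univ_sum]
  congr 1
  refine sum_congr rfl fun e _ => ?_
  rw [prod_mul_distrib, sum_mul, exp_sum]

theorem Complex.sum_signVectors_prod_mul_cos_eq_zero (hι : Odd (Fintype.card ι)) (z : ι → ℂ) :
    ∑ e ∈ signVectors ι, (∏ j, (e j : ℂ)) * cos (∑ i, (e i : ℂ) * z i) = 0 := by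
  rw [← CharZero.eq_neg_self_iff]
  conv_lhs => rw [← sum_signVectors_comp_neg]
  rw [← sum_neg_distrib]
  refine sum_congr rfl fun e _ => ?_
  simp only [Pi.neg_apply, ofReal_neg, neg_mul, sum_neg_distrib, cos_neg]
  rw [prod_neg, card_univ, hι.neg_one_pow]
  ring

theorem Complex.prod_sin_eq_sum_signVectors_sin {m : ℕ} (hι : Fintype.card ι = 2 * m + 1)
    (z : ι → ℂ) :
    ∏ k, sin (z k) =
      ((-1) ^ m / 2 ^ Fintype.card ι) *
        ∑ e ∈ signVectors ι, (∏ j, (e j : ℂ)) * sin (∑ i, (e i : ℂ) * z i) := by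
  have hcos := sum_signVectors_prod_mul_cos_eq_zero (hι ▸ odd_two_mul_add_one m) z
  have hpow : (2 * I) ^ Fintype.card ι = 2 ^ Fintype.card ι * (-1) ^ m * I := by
    rw [mul_pow, hι, pow_succ I, pow_mul, I_sq]; ring
  rw [prod_sin_eq_sum_signVectors_exp, hpow]
  simp_rw [exp_mul_I, mul_add, sum_add_distrib, hcos, ← mul_assoc, ← sum_mul, zero_add]
  field_simp
  rw [← pow_mul, pow_mul', neg_one_sq, one_pow, mul_one]

theorem prod_sin_eq_sum_over_signs_odd_general (N : ℕ) (hOdd : Odd N)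
    (θ : Fin N → ℝ) :
    ∏ k, Real.sin (θ k) =
      ((-1 : ℝ) ^ ((N - 1) / 2) / 2 ^ N) *
        ∑ e ∈ Fintype.piFinset (fun _ : Fin N => ({-1, 1} : Finset ℝ)),
          (∏ j, e j) * Real.sin (∑ i, e i * θ i) := by
  obtain ⟨m, hm⟩ := hOdd
  have hcard : Fintype.card (Fin N) = 2 * m + 1 := by rw [Fintype.card_fin, hm]
  rw [show (N - 1) / 2 = m by omega]
  apply ofReal_injective
  push_cast
  simpa only [signVectors, Fintype.card_fin] using
    Complex.prod_sin_eq_sum_signVectors_sin hcard fun k => (θ k : ℂ)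

/-- Generalized product-to-sum (Werner) formula for an odd number of sines: for odd `N ≥ 1`,
`∏ sin θ_k = ((-1)^((N-1)/2) / 2^N) ∑_{e ∈ {-1,1}^N} (∏ e_j) sin (∑ e_i θ_i)`. -/
theorem prod_sin_eq_sum_over_signs_odd (N : ℕ) (hN : 1 ≤ N) (hOdd : Odd N)
    (θ : Fin N → ℝ) :
    ∏ k, Real.sin (θ k) =
      ((-1 : ℝ) ^ ((N - 1) / 2) / 2 ^ N) *
        ∑ e ∈ Fintype.piFinset (fun _ : Fin N => ({-1, 1} : Finset ℝ)),
          (∏ j, e j) * Real.sin (∑ i, e i * θ i) :=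
  prod_sin_eq_sum_over_signs_odd_general N hOdd θ
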